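/- arXiv:1005.2940 — 8 statements merged into one kernel-verified Lean document; each statement's English description precedes it below -/
import Mathlib

section
/- If f : [0,∞) → ℝ is continuously differentiable, f has a finite limit L at infinity, and the integral ∫₀^∞ (f(ax) - f(bx))/x dx converges for a, b > 0, then ∫₀^∞ (f(ax) - f(bx))/x dx = (f(0) - L) · ln(b/a). -/
open MeasureTheory Real Set Filter

theorem frullani (f : ℝ → ℝ) (L : ℝ) (a b : ℝ) (ha : 0 < a) (hb : 0 < b)
    (hf : ContDiffOn ℝ 1 f (Ici 0))
    (hL : Tendsto f atTop (nhds L))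
    (hint : IntegrableOn (fun x => (f (a * x) - f (b * x)) / x) (Ioi 0)) :
    ∫ x in Ioi (0:ℝ), (f (a * x) - f (b * x)) / x = (f 0 - L) * Real.log (b / a) := by
  have hcont : ContinuousOn f (Ici 0) := hf.continuousOn
  have hf0 : Tendsto f (nhdsWithin 0 (Ioi 0)) (nhds (f 0)) :=
    (hcont 0 self_mem_Ici).mono_left (nhdsWithin_mono 0 Ioi_subset_Ici_self)
  have hdiv : (fun x => (f (a * x) - f (b * x)) / x) = fun x => x⁻¹ • (f (a * x) - f (b * x)) :=
    funext fun x => by rw [smul_eq_mul, inv_mul_eq_div]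
  rw [hdiv] at hint ⊢
  rw [Frullani.integral_Ioi_eq ((hcont.mono Ioi_subset_Ici_self).locallyIntegrableOn
    measurableSet_Ioi) ha hb hf0 hL hint, smul_eq_mul, mul_comm]
end

section
/- For a, b, c > 0, ∫₀^∞ (a·exp(-c·e^{ax})/(1 - e^{-ax}) - b·exp(-c·e^{bx})/(1 - e^{-bx})) dx = e^{-c} · ln(b/a). -/
open MeasureTheory Real Set Filter Topology Asymptotics

/-!
With `φ t = t * exp (-c * exp t) / (1 - exp (-t))` the integrand is `(φ (a x) - φ (b x)) / x`, so
the theorem is Frullani's integral with `φ (0⁺) = exp (-c)` and `φ (∞) = 0`. What remains is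
integrability: `φ t - exp (-c) = O(t)` as `t → 0⁺` keeps the integrand bounded near `0`, and
`φ t / t` decays like `exp (-c t)` at infinity.
-/

section FrullaniIntegrability

variable {E : Type*} [NormedAddCommGroup E] {f : ℝ → E} {L : E}

theorem tendsto_of_isBigO_sub_id {l : Filter ℝ} (h : (fun x ↦ f x - L) =O[l] id)
    (hl : l ≤ 𝓝 0) : Tendsto f l (𝓝 L) :=
  tendsto_sub_nhds_zero_iff.1 (h.trans_tendsto (tendsto_id.mono_right hl))

theorem tendsto_const_mul_nhdsGT_zero {d : ℝ} (hd : 0 < d) :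
    Tendsto (fun x ↦ d * x) (𝓝[>] 0) (𝓝[>] 0) := by
  refine tendsto_nhdsWithin_iff.2 ⟨?_, eventually_nhdsWithin_of_forall fun x hx ↦ mul_pos hd hx⟩
  simpa using ((continuous_const_mul d).tendsto 0).mono_left nhdsWithin_le_nhds

theorem isBigO_sub_comp_const_mul (hL : (fun x ↦ f x - L) =O[𝓝[>] 0] id) {d : ℝ} (hd : 0 < d) :
    (fun x ↦ f (d * x) - L) =O[𝓝[>] 0] id :=
  (hL.comp_tendsto (tendsto_const_mul_nhdsGT_zero hd)).trans ((isBigO_refl id _).const_mul_left d)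

variable [NormedSpace ℝ E]

theorem integrableOn_Ioi_inv_smul_comp_const_mul (hR : IntegrableOn (fun x ↦ x⁻¹ • f x) (Ioi 1))
    {d : ℝ} (hd : 0 < d) : IntegrableOn (fun x ↦ x⁻¹ • f (d * x)) (Ioi d⁻¹) := by
  have h := (integrableOn_Ioi_comp_mul_left_iff (fun x ↦ x⁻¹ • f x) d⁻¹ hd).2
    (by rwa [mul_inv_cancel₀ hd.ne'])
  have heq : (fun x ↦ x⁻¹ • f (d * x)) = fun x ↦ d • ((d * x)⁻¹ • f (d * x)) := by
    ext x
    rw [smul_smul, mul_inv, ← mul_assoc, mul_inv_cancel₀ hd.ne', one_mul]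
  exact heq ▸ h.smul d

theorem Frullani.integrableOn_Ioi_inv_smul_sub (hf : ContinuousOn f (Ioi 0))
    (hL : (fun x ↦ f x - L) =O[𝓝[>] 0] id) (hR : IntegrableOn (fun x ↦ x⁻¹ • f x) (Ioi 1))
    {a b : ℝ} (ha : 0 < a) (hb : 0 < b) :
    IntegrableOn (fun x ↦ x⁻¹ • (f (a * x) - f (b * x))) (Ioi 0) := by
  have hcomp {d : ℝ} (hd : 0 < d) : ContinuousOn (fun x ↦ f (d * x)) (Ioi 0) :=
    hf.comp (continuousOn_const.mul continuousOn_id) fun x hx ↦ mul_pos hd hx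
  have hcont : ContinuousOn (fun x ↦ x⁻¹ • (f (a * x) - f (b * x))) (Ioi 0) :=
    (continuousOn_inv₀.mono fun x hx ↦ ne_of_gt hx).smul ((hcomp ha).sub (hcomp hb))
  have hatTop {d : ℝ} (hd : 0 < d) : IntegrableAtFilter (fun x ↦ x⁻¹ • f (d * x)) atTop :=
    ⟨_, Ioi_mem_atTop _, integrableOn_Ioi_inv_smul_comp_const_mul hR hd⟩
  have hbigO : (fun x ↦ x⁻¹ • (f (a * x) - f (b * x))) =O[𝓝[>] 0] fun _ ↦ (1 : ℝ) := by
    refine ((isBigO_refl (fun x : ℝ ↦ x⁻¹) _).smul ((isBigO_sub_comp_const_mul hL ha).sub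
      (isBigO_sub_comp_const_mul hL hb))).congr' (.of_forall fun x ↦ by simp) ?_
    filter_upwards [self_mem_nhdsWithin] with x (hx : 0 < x)
    simp [inv_mul_cancel₀ hx.ne']
  rw [integrableOn_Ioi_iff_integrableAtFilter_atTop_nhdsWithin]
  refine ⟨?_, ?_, hcont.locallyIntegrableOn measurableSet_Ioi⟩
  · simp_rw [smul_sub]
    exact (hatTop ha).sub (hatTop hb)
  · exact hbigO.integrableAtFilter (hcont.stronglyMeasurableAtFilter_nhdsWithin measurableSet_Ioi 0)
      ⟨Ioo 0 1, Ioo_mem_nhdsGT one_pos, integrableOn_const measure_Ioo_lt_top.ne⟩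

theorem Frullani.integral_Ioi_eq_of_isBigO [CompleteSpace E] {R : E} (hf : ContinuousOn f (Ioi 0))
    (hL : (fun x ↦ f x - L) =O[𝓝[>] 0] id) (hR : Tendsto f atTop (𝓝 R))
    (hint : IntegrableOn (fun x ↦ x⁻¹ • f x) (Ioi 1)) {a b : ℝ} (ha : 0 < a) (hb : 0 < b) :
    ∫ x in Ioi 0, x⁻¹ • (f (a * x) - f (b * x)) = log (b / a) • (L - R) :=
  Frullani.integral_Ioi_eq (hf.locallyIntegrableOn measurableSet_Ioi) ha hb
    (tendsto_of_isBigO_sub_id hL nhdsWithin_le_nhds) hR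
    (Frullani.integrableOn_Ioi_inv_smul_sub hf hL hint ha hb)

end FrullaniIntegrability

section ExpExpKernel

noncomputable def expExpKernel (c t : ℝ) : ℝ := t * exp (-c * exp t) / (1 - exp (-t))

variable {c t : ℝ}

theorem one_sub_exp_neg_pos (ht : 0 < t) : 0 < 1 - exp (-t) :=
  sub_pos.2 (exp_lt_one_iff.2 (neg_lt_zero.2 ht))

theorem abs_div_one_sub_exp_neg_sub_one_le (ht : 0 < t) : |t / (1 - exp (-t)) - 1| ≤ t := by
  have hD := one_sub_exp_neg_pos ht
  have hlow : 1 - t ≤ exp (-t) := by linarith [add_one_le_exp (-t)]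
  have hup : (1 + t) * exp (-t) ≤ 1 :=
    calc (1 + t) * exp (-t) ≤ exp t * exp (-t) := by gcongr; linarith [add_one_le_exp t]
      _ = 1 := by rw [← exp_add, add_neg_cancel, exp_zero]
  rw [abs_le, le_sub_iff_add_le, sub_le_iff_le_add, le_div_iff₀ hD, div_le_iff₀ hD]
  constructor <;> nlinarith

theorem continuousOn_expExpKernel (c : ℝ) : ContinuousOn (expExpKernel c) (Ioi 0) :=
  ContinuousOn.div (by fun_prop) (by fun_prop) fun _ ht ↦ (one_sub_exp_neg_pos ht).ne'

theorem isBigO_expExpKernel_sub (c : ℝ) :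
    (fun t ↦ expExpKernel c t - exp (-c)) =O[𝓝[>] 0] id := by
  set q : ℝ → ℝ := fun t ↦ t / (1 - exp (-t))
  have hq : (fun t ↦ q t - 1) =O[𝓝[>] 0] id :=
    IsBigO.of_bound 1 <| eventually_nhdsWithin_of_forall fun t (ht : 0 < t) ↦ by
      simpa [abs_of_pos ht] using abs_div_one_sub_exp_neg_sub_one_le ht
  have hq_one : q =O[𝓝[>] 0] fun _ ↦ (1 : ℝ) :=
    (tendsto_of_isBigO_sub_id hq nhdsWithin_le_nhds).isBigO_one ℝ
  have hE : (fun t ↦ exp (-c * exp t) - exp (-c)) =O[𝓝[>] 0] id := by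
    have := ((by fun_prop : Differentiable ℝ fun t ↦ exp (-c * exp t)) 0).hasDerivAt.isBigO_sub
    simp only [exp_zero, mul_one, sub_zero] at this
    exact this.mono nhdsWithin_le_nhds
  -- `expExpKernel c t - exp (-c) = (exp (-c * exp t) - exp (-c)) * q t + exp (-c) * (q t - 1)`
  refine (((hE.mul hq_one).congr_right fun t ↦ mul_one _).add
    (hq.const_mul_left (exp (-c)))).congr_left fun t ↦ ?_
  simp only [expExpKernel, q]
  ring

theorem expExpKernel_nonneg (ht : 0 < t) : 0 ≤ expExpKernel c t :=
  div_nonneg (mul_nonneg ht.le (exp_pos _).le) (one_sub_exp_neg_pos ht).le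

theorem expExpKernel_le (hc : 0 ≤ c) (ht : 1 ≤ t) :
    expExpKernel c t ≤ t * exp (-c * t) / (1 - exp (-1)) := by
  have hnum : exp (-c * exp t) ≤ exp (-c * t) := exp_le_exp.2 (by nlinarith [add_one_le_exp t])
  have hden : 1 - exp (-1) ≤ 1 - exp (-t) := by gcongr
  have := one_sub_exp_neg_pos one_pos
  unfold expExpKernel
  gcongr

theorem tendsto_expExpKernel_atTop (hc : 0 < c) : Tendsto (expExpKernel c) atTop (𝓝 0) := by
  have h := (tendsto_rpow_mul_exp_neg_mul_atTop_nhds_zero 1 c hc).div_const (1 - exp (-1))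
  simp only [rpow_one, zero_div] at h
  refine tendsto_of_tendsto_of_tendsto_of_le_of_le' tendsto_const_nhds h ?_ ?_
  · filter_upwards [eventually_gt_atTop 0] with t ht using expExpKernel_nonneg ht
  · filter_upwards [eventually_ge_atTop 1] with t ht using expExpKernel_le hc.le ht

theorem integrableOn_inv_smul_expExpKernel (hc : 0 < c) :
    IntegrableOn (fun t ↦ t⁻¹ • expExpKernel c t) (Ioi 1) := by
  refine Integrable.mono' ((exp_neg_integrableOn_Ioi 1 hc).div_const (1 - exp (-1)))
    (by unfold expExpKernel; fun_prop) ((ae_restrict_iff' measurableSet_Ioi).2 (.of_forall ?_))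
  intro t (ht : 1 < t)
  have ht0 : 0 < t := one_pos.trans ht
  rw [smul_eq_mul, norm_mul, norm_inv, norm_of_nonneg ht0.le,
    norm_of_nonneg (expExpKernel_nonneg ht0), inv_mul_le_iff₀ ht0]
  calc expExpKernel c t ≤ t * exp (-c * t) / (1 - exp (-1)) := expExpKernel_le hc.le ht.le
    _ = t * (exp (-c * t) / (1 - exp (-1))) := mul_div_assoc _ _ _

end ExpExpKernel

theorem frullani_exp_exp (a b c : ℝ) (ha : 0 < a) (hb : 0 < b) (hc : 0 < c) :
    ∫ x in Ioi (0:ℝ),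
      (a * Real.exp (-c * Real.exp (a * x)) / (1 - Real.exp (-a * x))
        - b * Real.exp (-c * Real.exp (b * x)) / (1 - Real.exp (-b * x)))
      = Real.exp (-c) * Real.log (b / a) := by
  have hkernel (d x : ℝ) (hx : x ≠ 0) :
      d * exp (-c * exp (d * x)) / (1 - exp (-d * x)) = x⁻¹ • expExpKernel c (d * x) := by
    rw [expExpKernel, smul_eq_mul, neg_mul d]
    field_simp
  rw [setIntegral_congr_fun measurableSet_Ioi
      (g := fun x ↦ x⁻¹ • (expExpKernel c (a * x) - expExpKernel c (b * x))) fun x (hx : 0 < x) ↦ by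
      simp only [hkernel a x hx.ne', hkernel b x hx.ne', ← smul_sub],
    Frullani.integral_Ioi_eq_of_isBigO (continuousOn_expExpKernel c) (isBigO_expExpKernel_sub c)
      (tendsto_expExpKernel_atTop hc) (integrableOn_inv_smul_expExpKernel hc) ha hb,
    smul_eq_mul, sub_zero, mul_comm]
end

section
/- For a, b, p, q > 0, ∫₀^∞ (ln(a + b·e^{-px}) - ln(a + b·e^{-qx}))/x dx = ln(a/(a+b)) · ln(p/q). -/
open MeasureTheory Real Set Filter Topology

/-!
This is Frullani's integral for `f y = log (a + b * exp (-y))`, which tends to `log (a + b)`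
at `0⁺` and to `log a` at `+∞`. Integrability of the integrand follows from
`|f (p x) - f (q x)| ≤ (b / a) |p - q| x (exp (-p x) + exp (-q x))`, a consequence of the
Lipschitz bounds of `log` on `[a, ∞)` and of `exp` on `(-∞, max u v]`.
-/

lemma Real.log_sub_log_le_of_le {c u v : ℝ} (hc : 0 < c) (hu : 0 < u) (hv : c ≤ v) :
    log u - log v ≤ |u - v| / c := by
  have hv0 : 0 < v := hc.trans_le hv
  calc log u - log v = log (u / v) := (log_div hu.ne' hv0.ne').symm
    _ ≤ u / v - 1 := log_le_sub_one_of_pos (div_pos hu hv0)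
    _ = (u - v) / v := by field_simp
    _ ≤ |u - v| / v := by gcongr; exact le_abs_self _
    _ ≤ |u - v| / c := by gcongr

lemma Real.abs_log_sub_log_le {c u v : ℝ} (hc : 0 < c) (hu : c ≤ u) (hv : c ≤ v) :
    |log u - log v| ≤ |u - v| / c := by
  refine abs_sub_le_iff.mpr ⟨log_sub_log_le_of_le hc (hc.trans_le hu) hv, ?_⟩
  rw [abs_sub_comm]
  exact log_sub_log_le_of_le hc (hc.trans_le hv) hu

lemma Real.exp_sub_exp_le (u v : ℝ) : exp u - exp v ≤ (u - v) * exp u := by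
  have : v - u + 1 ≤ exp (v - u) := add_one_le_exp _
  have : exp v = exp u * exp (v - u) := by rw [← exp_add]; ring_nf
  nlinarith [exp_pos u]

lemma Real.abs_exp_sub_exp_le (u v : ℝ) : |exp u - exp v| ≤ |u - v| * exp (max u v) := by
  rcases le_total v u with h | h
  · rw [abs_of_nonneg (sub_nonneg.2 (exp_le_exp.2 h)), abs_of_nonneg (sub_nonneg.2 h),
      max_eq_left h]
    exact exp_sub_exp_le _ _
  · rw [abs_sub_comm, abs_of_nonneg (sub_nonneg.2 (exp_le_exp.2 h)), abs_sub_comm,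
      abs_of_nonneg (sub_nonneg.2 h), max_eq_right h]
    exact exp_sub_exp_le _ _

lemma abs_log_add_mul_exp_sub_le {a b : ℝ} (ha : 0 < a) (hb : 0 ≤ b) (u v : ℝ) :
    |log (a + b * exp u) - log (a + b * exp v)| ≤ b / a * |u - v| * exp (max u v) := by
  have hle (w : ℝ) : a ≤ a + b * exp w := le_add_of_nonneg_right (by positivity)
  calc |log (a + b * exp u) - log (a + b * exp v)|
      ≤ |a + b * exp u - (a + b * exp v)| / a := abs_log_sub_log_le ha (hle u) (hle v)
    _ = b * |exp u - exp v| / a := by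
        rw [add_sub_add_left_eq_sub, ← mul_sub, abs_mul, abs_of_nonneg hb]
    _ ≤ b * (|u - v| * exp (max u v)) / a := by gcongr; exact abs_exp_sub_exp_le u v
    _ = b / a * |u - v| * exp (max u v) := by ring

lemma integrableOn_frullani_log_add_mul_exp {a b p q : ℝ} (ha : 0 < a) (hb : 0 ≤ b) (hp : 0 < p)
    (hq : 0 < q) :
    IntegrableOn
      (fun x ↦ x⁻¹ • (log (a + b * exp (-(p * x))) - log (a + b * exp (-(q * x))))) (Ioi 0) := by
  have hmaj : IntegrableOn (fun x ↦ b / a * |p - q| * (exp (-p * x) + exp (-q * x))) (Ioi 0) :=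
    ((exp_neg_integrableOn_Ioi 0 hp).add (exp_neg_integrableOn_Ioi 0 hq)).const_mul _
  refine hmaj.mono' (by fun_prop) ?_
  filter_upwards [ae_restrict_mem measurableSet_Ioi] with x (hx : 0 < x)
  have hdiff : |-(p * x) - -(q * x)| = |p - q| * x := by
    rw [show -(p * x) - -(q * x) = (q - p) * x by ring, abs_mul, abs_sub_comm, abs_of_pos hx]
  have hmax : exp (max (-(p * x)) (-(q * x))) ≤ exp (-p * x) + exp (-q * x) := by
    rw [neg_mul, neg_mul]
    rcases max_choice (-(p * x)) (-(q * x)) with h | h <;> rw [h] <;>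
      linarith [exp_pos (-(p * x)), exp_pos (-(q * x))]
  rw [smul_eq_mul, norm_mul, norm_inv, norm_of_nonneg hx.le, norm_eq_abs]
  calc x⁻¹ * |log (a + b * exp (-(p * x))) - log (a + b * exp (-(q * x)))|
      ≤ x⁻¹ * (b / a * |-(p * x) - -(q * x)| * exp (max (-(p * x)) (-(q * x)))) := by
        gcongr; exact abs_log_add_mul_exp_sub_le ha hb _ _
    _ = b / a * |p - q| * exp (max (-(p * x)) (-(q * x))) := by
        rw [hdiff]; field_simp
    _ ≤ b / a * |p - q| * (exp (-p * x) + exp (-q * x)) := by gcongr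

theorem frullani_log_exp (a b p q : ℝ) (ha : 0 < a) (hb : 0 < b) (hp : 0 < p) (hq : 0 < q) :
    ∫ x in Ioi (0:ℝ),
      (Real.log (a + b * Real.exp (-p * x)) - Real.log (a + b * Real.exp (-q * x))) / x
      = Real.log (a / (a + b)) * Real.log (p / q) := by
  set f : ℝ → ℝ := fun y ↦ log (a + b * exp (-y))
  have hcont : Continuous f := by
    refine continuous_iff_continuousAt.2 fun y ↦ ?_
    exact (continuousAt_log (by positivity)).comp (by fun_prop)
  have h0 : Tendsto f (𝓝[>] 0) (𝓝 (log (a + b))) := by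
    simpa [f] using hcont.continuousWithinAt (s := Ioi 0) (x := 0) |>.tendsto
  have hinf : Tendsto f atTop (𝓝 (log a)) := by
    have : Tendsto (fun y ↦ a + b * exp (-y)) atTop (𝓝 (a + b * 0)) :=
      tendsto_const_nhds.add ((tendsto_exp_atBot.comp tendsto_neg_atTop_atBot).const_mul b)
    rw [mul_zero, add_zero] at this
    exact ((continuousAt_log ha.ne').tendsto).comp this
  have hfrullani := Frullani.integral_Ioi_eq (hcont.locallyIntegrable.locallyIntegrableOn _)
    hp hq h0 hinf (integrableOn_frullani_log_add_mul_exp ha hb.le hp hq)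
  simp only [f, smul_eq_mul] at hfrullani
  conv_lhs => simp only [neg_mul, div_eq_inv_mul]
  rw [hfrullani, log_div hq.ne' hp.ne', log_div hp.ne' hq.ne', log_div ha.ne' (by positivity)]
  ring
end

section
/- For a, b > 0, ∫₀^∞ (b·ln(1 + ax) - a·ln(1 + bx))/x² dx = a·b·ln(b/a). -/
/-!
The integrand is the derivative of
`F x = (a log (1 + b x) - b log (1 + a x)) / x + a b (log (1 + b x) - log (1 + a x))`,
which tends to `0` as `x → 0⁺` and to `a b log (b / a)` as `x → ∞`. By concavity of `log`,
`c ↦ log (1 + c x) / c` is antitone, so the integrand has the constant sign of `b - a`; the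
fundamental theorem of calculus for monotone primitives on `(0, ∞)` then gives integrability
and the value of the integral at once.
-/

open MeasureTheory Real Set Filter Topology

namespace Real

theorem hasDerivAt_log_one_add_mul (c : ℝ) {x : ℝ} (h : 1 + c * x ≠ 0) :
    HasDerivAt (fun y => log (1 + c * y)) (c / (1 + c * x)) x := by
  simpa using (((hasDerivAt_id x).const_mul c).const_add 1).log h

theorem tendsto_log_one_add_mul_div_nhdsNE (c : ℝ) :
    Tendsto (fun x => log (1 + c * x) / x) (𝓝[≠] 0) (𝓝 c) := by
  have h := hasDerivAt_iff_tendsto_slope.mp (hasDerivAt_log_one_add_mul c (x := 0) (by simp))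
  rw [mul_zero, add_zero, div_one] at h
  exact h.congr fun x => by simp [slope_def_field]

theorem tendsto_log_one_add_mul_sub_log_atTop {c : ℝ} (hc : 0 < c) :
    Tendsto (fun x => log (1 + c * x) - log x) atTop (𝓝 (log c)) := by
  have h : Tendsto (fun x : ℝ => log (c + x⁻¹)) atTop (𝓝 (log c)) := by
    have := (tendsto_const_nhds (x := c)).add tendsto_inv_atTop_zero
    rw [add_zero] at this
    exact (continuousAt_log hc.ne').tendsto.comp this
  refine h.congr' ?_
  filter_upwards [eventually_gt_atTop 0] with x hx
  rw [← log_div (by positivity) hx.ne']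
  congr 1
  field_simp
  ring

theorem tendsto_log_one_add_mul_div_atTop {c : ℝ} (hc : 0 < c) :
    Tendsto (fun x => log (1 + c * x) / x) atTop (𝓝 0) := by
  have := ((tendsto_log_one_add_mul_sub_log_atTop hc).mul tendsto_inv_atTop_zero).add
    isLittleO_log_id_atTop.tendsto_div_nhds_zero
  rw [mul_zero, zero_add] at this
  exact this.congr fun x => by simp only [id]; ring

theorem mul_log_one_add_mul_le {a b x : ℝ} (ha : 0 < a) (hab : a ≤ b) (hx : 0 ≤ x) :
    a * log (1 + b * x) ≤ b * log (1 + a * x) := by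
  have hb : 0 < b := ha.trans_le hab
  have h := strictConcaveOn_log_Ioi.concaveOn.2 (mem_Ioi.2 one_pos)
    (mem_Ioi.2 (by positivity : 0 < 1 + b * x))
    (sub_nonneg.2 ((div_le_one hb).2 hab) : 0 ≤ 1 - a / b) (by positivity : 0 ≤ a / b) (by ring)
  have hmid : (1 - a / b) • (1 : ℝ) + (a / b) • (1 + b * x) = 1 + a * x := by
    simp only [smul_eq_mul]; field_simp; ring
  rw [hmid, smul_eq_mul, smul_eq_mul, log_one, mul_zero, zero_add] at h
  rwa [div_mul_eq_mul_div, div_le_iff₀ hb, mul_comm (log _)] at h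

end Real

-- At `x = 0` the convention `y / 0 = 0` gives the value `0`, which is the right limit.
noncomputable def frullaniLogPrimitive (a b x : ℝ) : ℝ :=
  a * (log (1 + b * x) / x) - b * (log (1 + a * x) / x) + a * b * (log (1 + b * x) - log (1 + a * x))

theorem frullaniLogPrimitive_zero (a b : ℝ) : frullaniLogPrimitive a b 0 = 0 := by
  simp [frullaniLogPrimitive]

theorem hasDerivAt_frullaniLogPrimitive {a b x : ℝ} (hx : x ≠ 0) (hax : 1 + a * x ≠ 0)
    (hbx : 1 + b * x ≠ 0) :
    HasDerivAt (frullaniLogPrimitive a b)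
      ((b * log (1 + a * x) - a * log (1 + b * x)) / x ^ 2) x := by
  have hla := hasDerivAt_log_one_add_mul a hax
  have hlb := hasDerivAt_log_one_add_mul b hbx
  have h := (((hlb.div (hasDerivAt_id x) hx).const_mul a).sub
    ((hla.div (hasDerivAt_id x) hx).const_mul b)).add ((hlb.sub hla).const_mul (a * b))
  refine h.congr_deriv ?_
  simp only [id]
  field_simp
  ring

theorem continuousWithinAt_frullaniLogPrimitive (a b : ℝ) :
    ContinuousWithinAt (frullaniLogPrimitive a b) (Ici 0) 0 := by
  rw [← continuousWithinAt_Ioi_iff_Ici, ContinuousWithinAt, frullaniLogPrimitive_zero]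
  have hquot (c : ℝ) : Tendsto (fun x => log (1 + c * x) / x) (𝓝[>] 0) (𝓝 c) :=
    (tendsto_log_one_add_mul_div_nhdsNE c).mono_left (nhdsWithin_mono 0 fun x hx => ne_of_gt hx)
  have hlog (c : ℝ) : Tendsto (fun x => log (1 + c * x)) (𝓝[>] 0) (𝓝 0) := by
    simpa using ((hasDerivAt_log_one_add_mul c (x := 0) (by simp)).continuousAt.tendsto).mono_left
      nhdsWithin_le_nhds
  have h := (((hquot b).const_mul a).sub ((hquot a).const_mul b)).add
    (((hlog b).sub (hlog a)).const_mul (a * b))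
  rwa [mul_comm b a, sub_self, sub_self, mul_zero, add_zero] at h

theorem tendsto_frullaniLogPrimitive_atTop {a b : ℝ} (ha : 0 < a) (hb : 0 < b) :
    Tendsto (frullaniLogPrimitive a b) atTop (𝓝 (a * b * log (b / a))) := by
  have hdiff : Tendsto (fun x => log (1 + b * x) - log (1 + a * x)) atTop (𝓝 (log (b / a))) := by
    rw [log_div hb.ne' ha.ne']
    refine ((tendsto_log_one_add_mul_sub_log_atTop hb).sub
      (tendsto_log_one_add_mul_sub_log_atTop ha)).congr fun x => ?_
    ring
  rw [show a * b * log (b / a) = a * 0 - b * 0 + a * b * log (b / a) by ring]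
  exact (((tendsto_log_one_add_mul_div_atTop hb).const_mul a).sub
    ((tendsto_log_one_add_mul_div_atTop ha).const_mul b)).add (hdiff.const_mul (a * b))

theorem frullani_log (a b : ℝ) (ha : 0 < a) (hb : 0 < b) :
    ∫ x in Ioi (0:ℝ), (b * Real.log (1 + a * x) - a * Real.log (1 + b * x)) / x ^ 2
      = a * b * Real.log (b / a) := by
  have hderiv : ∀ x ∈ Ioi (0 : ℝ), HasDerivAt (frullaniLogPrimitive a b)
      ((b * log (1 + a * x) - a * log (1 + b * x)) / x ^ 2) x := fun x (hx : 0 < x) =>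
    hasDerivAt_frullaniLogPrimitive hx.ne' (by positivity) (by positivity)
  have hcont := continuousWithinAt_frullaniLogPrimitive a b
  have hlim := tendsto_frullaniLogPrimitive_atTop ha hb
  rcases le_total a b with hab | hba
  · rw [integral_Ioi_of_hasDerivAt_of_nonneg hcont hderiv (fun x (hx : 0 < x) =>
      div_nonneg (sub_nonneg.2 (mul_log_one_add_mul_le ha hab hx.le)) (sq_nonneg x)) hlim,
      frullaniLogPrimitive_zero, sub_zero]
  · rw [integral_Ioi_of_hasDerivAt_of_nonpos hcont hderiv (fun x (hx : 0 < x) =>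
      div_nonpos_of_nonpos_of_nonneg (sub_nonpos.2 (mul_log_one_add_mul_le hb hba hx.le))
        (sq_nonneg x)) hlim, frullaniLogPrimitive_zero, sub_zero]
end

section
/- Let a, b, c, g, h, p, q be real numbers with p, q > 0, c > 0, and c·e^{x} + g + h·e^{-x} > 0 for all x ≥ 0. Then ∫₀^∞ ((a + b·e^{-px})/(c·e^{px} + g + h·e^{-px}) - (a + b·e^{-qx})/(c·e^{qx} + g + h·e^{-qx}))/x dx = ((a+b)/(c+g+h)) · ln(q/p). -/
/-!
In the variable `u = exp (-y)` the function `y ↦ (a + b e^{-y}) / (c e^y + g + h e^{-y})` becomes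
the rational function `R u = u (a + b u) / (c + g u + h u²)`. Its denominator is `u` times the
original one for `0 < u ≤ 1` and equals `c` at `u = 0`, so `R` is smooth, hence Lipschitz, on
`[0, 1]`. Then `|R (e^{-px}) - R (e^{-qx})| / x ≤ K |p - q| e^{-min p q · x}`, so the integrand
is integrable and Frullani's theorem applies, with limits `R 1 = (a + b) / (c + g + h)` at `0⁺`
and `R 0 = 0` at `+∞`.
-/

open MeasureTheory Real Set Filter Topology NNReal

theorem abs_exp_neg_sub_exp_neg_le (s t : ℝ) :
    |exp (-s) - exp (-t)| ≤ |s - t| * exp (-min s t) := by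
  wlog hst : s ≤ t generalizing s t
  · simpa [abs_sub_comm, min_comm] using this t s (le_of_not_ge hst)
  have hexp : exp (-t) = exp (-s) * exp (-(t - s)) := by rw [← exp_add]; ring_nf
  have hgap : 1 - (t - s) ≤ exp (-(t - s)) := by linarith [add_one_le_exp (-(t - s))]
  rw [min_eq_left hst, abs_sub_comm s t, abs_of_nonneg (sub_nonneg.2 hst),
    abs_of_nonneg (sub_nonneg.2 (exp_le_exp.2 (neg_le_neg hst))), hexp]
  nlinarith [exp_pos (-s)]

theorem exp_neg_mem_Icc {y : ℝ} (hy : 0 ≤ y) : exp (-y) ∈ Icc 0 1 :=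
  ⟨(exp_pos _).le, exp_le_one_iff.2 (neg_nonpos.2 hy)⟩

namespace LipschitzOnWith

variable {E : Type*} [NormedAddCommGroup E] {R : ℝ → E} {K : ℝ≥0}

theorem norm_inv_smul_sub_comp_exp_neg_le [NormedSpace ℝ E]
    (hR : LipschitzOnWith K R (Icc 0 1)) {p q x : ℝ} (hp : 0 < p) (hq : 0 < q) (hx : 0 < x) :
    ‖x⁻¹ • (R (exp (-(p * x))) - R (exp (-(q * x))))‖
      ≤ K * |p - q| * exp (-(min p q * x)) := by
  have hpx := exp_neg_mem_Icc (mul_pos hp hx).le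
  have hqx := exp_neg_mem_Icc (mul_pos hq hx).le
  have hexp := abs_exp_neg_sub_exp_neg_le (p * x) (q * x)
  rw [← sub_mul, abs_mul, abs_of_pos hx, ← min_mul_of_nonneg _ _ hx.le] at hexp
  rw [norm_smul, norm_inv, norm_of_nonneg hx.le, inv_mul_le_iff₀ hx]
  calc ‖R (exp (-(p * x))) - R (exp (-(q * x)))‖
      ≤ K * |exp (-(p * x)) - exp (-(q * x))| := hR.norm_sub_le hpx hqx
    _ ≤ K * (|p - q| * x * exp (-(min p q * x))) := by gcongr
    _ = x * (K * |p - q| * exp (-(min p q * x))) := by ring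

theorem continuousOn_comp_exp_neg (hR : LipschitzOnWith K R (Icc 0 1)) :
    ContinuousOn (fun y ↦ R (exp (-y))) (Ici 0) :=
  hR.continuousOn.comp (by fun_prop) fun _ hy ↦ exp_neg_mem_Icc hy

theorem integrableOn_inv_smul_sub_comp_exp_neg [NormedSpace ℝ E]
    (hR : LipschitzOnWith K R (Icc 0 1)) {p q : ℝ} (hp : 0 < p) (hq : 0 < q) :
    IntegrableOn (fun x ↦ x⁻¹ • (R (exp (-(p * x))) - R (exp (-(q * x))))) (Ioi 0) := by
  have hcont : ContinuousOn (fun x : ℝ ↦ x⁻¹ • (R (exp (-(p * x))) - R (exp (-(q * x)))))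
      (Ioi 0) := by
    have hcomp (r : ℝ) (hr : 0 < r) : ContinuousOn (fun x ↦ R (exp (-(r * x)))) (Ioi 0) :=
      hR.continuousOn_comp_exp_neg.comp (by fun_prop) fun x hx ↦ (mul_pos hr hx).le
    exact (continuousOn_inv₀.mono fun _ hx ↦ ne_of_gt hx).smul ((hcomp p hp).sub (hcomp q hq))
  have hdom : IntegrableOn (fun x ↦ K * |p - q| * exp (-(min p q * x))) (Ioi 0) := by
    simpa only [IntegrableOn, neg_mul] using
      (exp_neg_integrableOn_Ioi 0 (lt_min hp hq)).const_mul _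
  refine hdom.mono' (hcont.aestronglyMeasurable measurableSet_Ioi) ?_
  filter_upwards [ae_restrict_mem measurableSet_Ioi] with x hx
  exact hR.norm_inv_smul_sub_comp_exp_neg_le hp hq hx

theorem integral_Ioi_inv_smul_sub_comp_exp_neg [NormedSpace ℝ E] [CompleteSpace E]
    (hR : LipschitzOnWith K R (Icc 0 1)) {p q : ℝ} (hp : 0 < p) (hq : 0 < q) :
    ∫ x in Ioi 0, x⁻¹ • (R (exp (-(p * x))) - R (exp (-(q * x))))
      = log (q / p) • (R 1 - R 0) := by
  have hcont := hR.continuousOn_comp_exp_neg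
  have hzero : Tendsto (fun y ↦ R (exp (-y))) (𝓝[>] 0) (𝓝 (R 1)) := by
    simpa using ((hcont 0 self_mem_Ici).mono Ioi_subset_Ici_self).tendsto
  have hinfty : Tendsto (fun y ↦ R (exp (-y))) atTop (𝓝 (R 0)) :=
    (hR.continuousOn 0 ⟨le_rfl, zero_le_one⟩).tendsto.comp <|
      tendsto_nhdsWithin_iff.2 ⟨tendsto_exp_neg_atTop_nhds_zero,
        eventually_ge_atTop 0 |>.mono fun _ hy ↦ exp_neg_mem_Icc hy⟩
  exact Frullani.integral_Ioi_eq ((hcont.mono Ioi_subset_Ici_self).locallyIntegrableOn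
    measurableSet_Ioi) hp hq hzero hinfty (hR.integrableOn_inv_smul_sub_comp_exp_neg hp hq)

end LipschitzOnWith

noncomputable def expNegProfile (a b c g h u : ℝ) : ℝ :=
  u * (a + b * u) / (c + g * u + h * u ^ 2)

theorem div_eq_expNegProfile (a b c g h y : ℝ) :
    (a + b * exp (-y)) / (c * exp y + g + h * exp (-y)) = expNegProfile a b c g h (exp (-y)) := by
  have hu : exp (-y) ≠ 0 := (exp_pos _).ne'
  rw [expNegProfile, show c + g * exp (-y) + h * exp (-y) ^ 2
      = exp (-y) * (c * exp y + g + h * exp (-y)) by rw [exp_neg]; field_simp,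
    mul_div_mul_left _ _ hu]

theorem expNegProfile_denom_pos {c g h u : ℝ} (hc : 0 < c)
    (hden : ∀ y, 0 ≤ y → 0 < c * exp y + g + h * exp (-y)) (hu : u ∈ Icc 0 1) :
    0 < c + g * u + h * u ^ 2 := by
  rcases hu.1.eq_or_lt with rfl | hu0
  · simpa using hc
  have hy : 0 ≤ -log u := neg_nonneg.2 (log_nonpos hu0.le hu.2)
  have := mul_pos hu0 (hden _ hy)
  rw [neg_neg, exp_log hu0, exp_neg, exp_log hu0] at this
  have hexpand : u * (c * u⁻¹ + g + h * u) = c + g * u + h * u ^ 2 := by field_simp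
  rwa [hexpand] at this

theorem exists_lipschitzOnWith_expNegProfile {a b c g h : ℝ}
    (hden : ∀ u ∈ Icc (0 : ℝ) 1, c + g * u + h * u ^ 2 ≠ 0) :
    ∃ K, LipschitzOnWith K (expNegProfile a b c g h) (Icc 0 1) :=
  ContDiffOn.exists_lipschitzOnWith (n := 1)
    (ContDiffOn.div (by fun_prop) (by fun_prop) hden) one_ne_zero (convex_Icc 0 1) isCompact_Icc

theorem frullani_rational_exp (a b c g h p q : ℝ) (hp : 0 < p) (hq : 0 < q) (hc : 0 < c)
    (hden : ∀ x : ℝ, 0 ≤ x → 0 < c * Real.exp x + g + h * Real.exp (-x)) :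
    ∫ x in Ioi (0:ℝ),
      ((a + b * Real.exp (-p * x)) / (c * Real.exp (p * x) + g + h * Real.exp (-p * x))
        - (a + b * Real.exp (-q * x)) / (c * Real.exp (q * x) + g + h * Real.exp (-q * x))) / x
      = ((a + b) / (c + g + h)) * Real.log (q / p) := by
  obtain ⟨K, hK⟩ := exists_lipschitzOnWith_expNegProfile (a := a) (b := b)
    fun u hu ↦ (expNegProfile_denom_pos hc hden hu).ne'
  have hintegrand : ∀ x : ℝ,
      ((a + b * exp (-p * x)) / (c * exp (p * x) + g + h * exp (-p * x))
        - (a + b * exp (-q * x)) / (c * exp (q * x) + g + h * exp (-q * x))) / x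
      = x⁻¹ • (expNegProfile a b c g h (exp (-(p * x)))
        - expNegProfile a b c g h (exp (-(q * x)))) := fun x ↦ by
    rw [neg_mul, neg_mul, div_eq_expNegProfile, div_eq_expNegProfile, smul_eq_mul, inv_mul_eq_div]
  simp_rw [hintegrand, hK.integral_Ioi_inv_smul_sub_comp_exp_neg hp hq, smul_eq_mul]
  simp [expNegProfile, mul_comm]
end

section
/- For p, q > 0 with p + q > 0 and q > 0, and p, q real with p/(p+q) > 0: for a, b > 0, ∫₀^∞ ln((p + q·e^{-ax})/(p + q·e^{-bx}))/x dx = ln(1 + q/p) · ln(b/a). -/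
/-!
This is Frullani's integral for `f y = log (p + q e^{-y})`, which tends to `log (p + q)` at `0` and
to `log p` at `∞`. Frullani's theorem needs `(f (a x) - f (b x)) / x` to be integrable: since
`|f' y| ≤ (q / p) e^{-y}`, the mean value theorem bounds it by `(q / p) |a - b| e^{-min a b · x}`.
-/

open MeasureTheory Real Set Filter Topology

section

variable {E : Type*} [NormedAddCommGroup E] [NormedSpace ℝ E] {f f' : ℝ → E} {C a b : ℝ}

theorem norm_sub_comp_mul_le_of_norm_deriv_le_exp
    (hf : ∀ y ∈ Ioi 0, HasDerivAt f (f' y) y) (hf' : ∀ y ∈ Ioi 0, ‖f' y‖ ≤ C * exp (-y))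
    (ha : 0 < a) (hb : 0 < b) {x : ℝ} (hx : 0 < x) :
    ‖f (a * x) - f (b * x)‖ ≤ C * |a - b| * x * exp (-min a b * x) := by
  have hC : 0 ≤ C := by
    have := (norm_nonneg _).trans (hf' 1 (mem_Ioi.2 one_pos))
    exact nonneg_of_mul_nonneg_left this (exp_pos _)
  have hmin : 0 < min a b * x := mul_pos (lt_min ha hb) hx
  have hderiv : ∀ y ∈ Ici (min a b * x), HasDerivWithinAt f (f' y) (Ici (min a b * x)) y :=
    fun y hy => (hf y (hmin.trans_le hy)).hasDerivWithinAt
  have hbound : ∀ y ∈ Ici (min a b * x), ‖f' y‖ ≤ C * exp (-min a b * x) := fun y hy =>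
    (hf' y (hmin.trans_le hy)).trans
      (mul_le_mul_of_nonneg_left (exp_le_exp.2 (by rw [neg_mul]; exact neg_le_neg hy)) hC)
  have hmem : ∀ c, min a b ≤ c → c * x ∈ Ici (min a b * x) := fun c hc =>
    mul_le_mul_of_nonneg_right hc hx.le
  calc ‖f (a * x) - f (b * x)‖
      ≤ C * exp (-min a b * x) * ‖a * x - b * x‖ :=
        (convex_Ici _).norm_image_sub_le_of_norm_hasDerivWithin_le hderiv hbound
          (hmem b (min_le_right a b)) (hmem a (min_le_left a b))
    _ = C * |a - b| * x * exp (-min a b * x) := by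
        rw [Real.norm_eq_abs, ← sub_mul, abs_mul, abs_of_pos hx]; ring

theorem integrableOn_Ioi_inv_smul_sub_comp_mul_of_norm_deriv_le_exp
    (hf : ∀ y ∈ Ioi 0, HasDerivAt f (f' y) y) (hf' : ∀ y ∈ Ioi 0, ‖f' y‖ ≤ C * exp (-y))
    (ha : 0 < a) (hb : 0 < b) :
    IntegrableOn (fun x ↦ x⁻¹ • (f (a * x) - f (b * x))) (Ioi 0) := by
  have hcont : ContinuousOn f (Ioi 0) := fun y hy => (hf y hy).continuousAt.continuousWithinAt
  have hmeas : ContinuousOn (fun x ↦ x⁻¹ • (f (a * x) - f (b * x))) (Ioi 0) := by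
    refine (continuousOn_inv₀.mono fun x hx => ne_of_gt hx).smul (.sub ?_ ?_)
    · exact hcont.comp (continuousOn_const.mul continuousOn_id) fun x hx => mul_pos ha hx
    · exact hcont.comp (continuousOn_const.mul continuousOn_id) fun x hx => mul_pos hb hx
  refine ((exp_neg_integrableOn_Ioi 0 (lt_min ha hb)).const_mul (C * |a - b|)).mono'
    (hmeas.aestronglyMeasurable measurableSet_Ioi) ?_
  filter_upwards [ae_restrict_mem measurableSet_Ioi] with x (hx : 0 < x)
  rw [norm_smul, norm_inv, Real.norm_of_nonneg hx.le]
  calc x⁻¹ * ‖f (a * x) - f (b * x)‖ ≤ x⁻¹ * (C * |a - b| * x * exp (-min a b * x)) :=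
        mul_le_mul_of_nonneg_left (norm_sub_comp_mul_le_of_norm_deriv_le_exp hf hf' ha hb hx)
          (inv_nonneg.2 hx.le)
    _ = C * |a - b| * exp (-min a b * x) := by field_simp [hx.ne']

end

lemma hasDerivAt_log_add_mul_exp_neg {p q : ℝ} (hp : 0 < p) (hq : 0 < q) (y : ℝ) :
    HasDerivAt (fun y ↦ log (p + q * exp (-y)))
      (-(q * exp (-y)) / (p + q * exp (-y))) y := by
  have hexp : HasDerivAt (fun y ↦ p + q * exp (-y)) (-(q * exp (-y))) y := by
    simpa using ((hasDerivAt_neg y).exp.const_mul q).const_add p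
  exact hexp.log (by positivity : 0 < p + q * exp (-y)).ne'

lemma norm_deriv_log_add_mul_exp_neg_le {p q : ℝ} (hp : 0 < p) (hq : 0 < q) (y : ℝ) :
    ‖-(q * exp (-y)) / (p + q * exp (-y))‖ ≤ q / p * exp (-y) := by
  rw [norm_div, norm_neg, Real.norm_of_nonneg (by positivity),
    Real.norm_of_nonneg (by positivity), div_mul_eq_mul_div]
  exact div_le_div_of_nonneg_left (by positivity) hp (le_add_of_nonneg_right (by positivity))

theorem frullani_log_ratio (p q a b : ℝ) (hp : 0 < p) (hq : 0 < q) (ha : 0 < a) (hb : 0 < b) :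
    ∫ x in Ioi (0:ℝ),
      Real.log ((p + q * Real.exp (-a * x)) / (p + q * Real.exp (-b * x))) / x
      = Real.log (1 + q / p) * Real.log (b / a) := by
  set f : ℝ → ℝ := fun y ↦ log (p + q * exp (-y))
  have hderiv := hasDerivAt_log_add_mul_exp_neg hp hq
  have hcont : Continuous f := continuous_iff_continuousAt.2 fun y ↦ (hderiv y).continuousAt
  have hzero : Tendsto f (𝓝[>] 0) (𝓝 (log (p + q))) := by
    simpa [f] using (hcont.tendsto 0).mono_left nhdsWithin_le_nhds
  have htop : Tendsto f atTop (𝓝 (log p)) := by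
    have : Tendsto (fun y ↦ p + q * exp (-y)) atTop (𝓝 p) := by
      simpa using (tendsto_exp_neg_atTop_nhds_zero.const_mul q).const_add p
    exact (continuousAt_log hp.ne').tendsto.comp this
  have hint := integrableOn_Ioi_inv_smul_sub_comp_mul_of_norm_deriv_le_exp
    (fun y _ ↦ hderiv y) (fun y _ ↦ norm_deriv_log_add_mul_exp_neg_le hp hq y) ha hb
  have hfrullani := Frullani.integral_Ioi_eq
    (hcont.continuousOn.locallyIntegrableOn measurableSet_Ioi) ha hb hzero htop hint
  calc ∫ x in Ioi (0:ℝ), log ((p + q * exp (-a * x)) / (p + q * exp (-b * x))) / x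
      = ∫ x in Ioi (0:ℝ), x⁻¹ • (f (a * x) - f (b * x)) := by
        refine setIntegral_congr_fun measurableSet_Ioi fun x _ ↦ ?_
        rw [log_div (by positivity) (by positivity), smul_eq_mul, neg_mul, neg_mul, inv_mul_eq_div]
    _ = log (1 + q / p) * log (b / a) := by
        rw [hfrullani, smul_eq_mul, ← log_div (by positivity) hp.ne', add_div, div_self hp.ne',
          mul_comm]
end

section
/- For a, b, p, q > 0 and n a positive integer, ∫₀^∞ (((ax+p)/(ax+q))^n - ((bx+p)/(bx+q))^n)/x dx = (1 - p^n/q^n) · ln(a/b). -/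
open MeasureTheory Real Set Filter Topology

/-!
Mathlib's Frullani theorem gives `∫₀^∞ (f (a x) - f (b x)) / x dx = log (b / a) (f (0⁺) - f (∞))`
once the integrand is known to be integrable. When `f` has an integrable derivative on `(0, ∞)`,
`(f (a x) - f (b x)) / x = ∫_b^a f' (t x) dt`, and `(x, t) ↦ f' (t x)` is integrable on
`(0, ∞) × (b, a]` since the slice at `t` has `L¹`-norm `‖f'‖₁ / t`; integrating out `t` gives the
integrability. For `f y = ((y + p) / (y + q)) ^ n` the base is nonnegative and monotone on
`[0, ∞)`, so `f` is monotone there and `f'` is integrable; `f 0 = (p / q) ^ n` and `f (∞) = 1`.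
-/

namespace Frullani

variable {E : Type*} [NormedAddCommGroup E] {a b : ℝ}

theorem integrable_prod_comp_mul {g : ℝ → E} (hgm : StronglyMeasurable g)
    (hg : IntegrableOn g (Ioi 0)) (hb : 0 < b) :
    Integrable (fun z : ℝ × ℝ ↦ g (z.2 * z.1))
      ((volume.restrict (Ioi 0)).prod (volume.restrict (Ioc b a))) := by
  have hsection (t : ℝ) (ht : t ∈ Ioc b a) : IntegrableOn (fun x ↦ g (t * x)) (Ioi 0) :=
    (integrableOn_Ioi_comp_mul_left_iff g 0 (hb.trans ht.1)).2 (by simpa using hg)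
  have hnorm (t : ℝ) (ht : t ∈ Ioc b a) :
      ∫ x in Ioi 0, ‖g (t * x)‖ = t⁻¹ * ∫ y in Ioi 0, ‖g y‖ := by
    simpa using integral_comp_mul_left_Ioi (fun y ↦ ‖g y‖) 0 (hb.trans ht.1)
  rw [integrable_prod_iff' (f := fun z : ℝ × ℝ ↦ g (z.2 * z.1))
    (hgm.comp_measurable (measurable_snd.mul measurable_fst)).aestronglyMeasurable]
  refine ⟨(ae_restrict_mem measurableSet_Ioc).mono hsection, ?_⟩
  refine IntegrableOn.congr_fun ?_ (fun t ht ↦ (hnorm t ht).symm) measurableSet_Ioc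
  refine (ContinuousOn.integrableOn_Icc ?_).mono_set Ioc_subset_Icc_self
  exact (continuousOn_inv₀.mono fun t ht ↦ (hb.trans_le ht.1).ne').mul continuousOn_const

variable [NormedSpace ℝ E] [CompleteSpace E] {f f' : ℝ → E}

theorem inv_smul_sub_eq_integral_Ioc (hderiv : ∀ y ∈ Ioi 0, HasDerivAt f (f' y) y)
    (hf' : IntegrableOn f' (Ioi 0)) (hb : 0 < b) (hba : b ≤ a) {x : ℝ} (hx : 0 < x) :
    x⁻¹ • (f (a * x) - f (b * x)) = ∫ t in Ioc b a, f' (t * x) := by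
  have hsub : uIcc (b * x) (a * x) ⊆ Ioi 0 := by
    rw [uIcc_of_le (by gcongr)]
    exact fun y hy ↦ (mul_pos hb hx).trans_le hy.1
  rw [← intervalIntegral.integral_of_le hba, intervalIntegral.integral_comp_mul_right _ hx.ne',
    intervalIntegral.integral_eq_sub_of_hasDerivAt (fun y hy ↦ hderiv y (hsub hy))
      ((hf'.mono_set hsub).intervalIntegrable)]

theorem integrableOn_Ioi_inv_smul_sub_s13 (hderiv : ∀ y ∈ Ioi 0, HasDerivAt f (f' y) y)
    (hf'm : StronglyMeasurable f') (hf' : IntegrableOn f' (Ioi 0)) (ha : 0 < a) (hb : 0 < b) :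
    IntegrableOn (fun x ↦ x⁻¹ • (f (a * x) - f (b * x))) (Ioi 0) := by
  wlog hba : b ≤ a generalizing a b
  · refine (this hb ha (not_le.1 hba).le).neg.congr_fun (fun x _ ↦ ?_) measurableSet_Ioi
    simp only [Pi.neg_apply, ← smul_neg, neg_sub]
  exact IntegrableOn.congr_fun (integrable_prod_comp_mul (a := a) hf'm hf' hb).integral_prod_left
    (fun x hx ↦ (inv_smul_sub_eq_integral_Ioc hderiv hf' hb hba hx).symm) measurableSet_Ioi

theorem integral_Ioi_eq_of_hasDerivAt {L R : E} (hderiv : ∀ y ∈ Ioi 0, HasDerivAt f (f' y) y)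
    (hf'm : StronglyMeasurable f') (hf' : IntegrableOn f' (Ioi 0)) (ha : 0 < a) (hb : 0 < b)
    (hL : Tendsto f (𝓝[>] 0) (𝓝 L)) (hR : Tendsto f atTop (𝓝 R)) :
    ∫ x in Ioi 0, x⁻¹ • (f (a * x) - f (b * x)) = log (b / a) • (L - R) :=
  integral_Ioi_eq
    ((HasDerivAt.continuousOn hderiv).locallyIntegrableOn measurableSet_Ioi) ha hb hL hR
    (integrableOn_Ioi_inv_smul_sub_s13 hderiv hf'm hf' ha hb)

end Frullani

section RationalPow

variable {p q : ℝ} (n : ℕ)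

theorem hasDerivAt_div_add_pow {y : ℝ} (hy : y + q ≠ 0) :
    HasDerivAt (fun y ↦ ((y + p) / (y + q)) ^ n)
      (n * ((y + p) / (y + q)) ^ (n - 1) * ((q - p) / (y + q) ^ 2)) y := by
  have h := ((hasDerivAt_id y).add_const p).div ((hasDerivAt_id y).add_const q) hy
  rw [id, one_mul, mul_one, add_sub_add_left_eq_sub] at h
  exact h.pow n

theorem tendsto_div_add_pow_atTop : Tendsto (fun y ↦ ((y + p) / (y + q)) ^ n) atTop (𝓝 1) := by
  have hlim : Tendsto (fun y ↦ 1 + (p - q) / (y + q)) atTop (𝓝 (1 + 0)) :=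
    tendsto_const_nhds.add
      (tendsto_const_nhds.div_atTop (tendsto_atTop_add_const_right _ q tendsto_id))
  have heq : (fun y ↦ 1 + (p - q) / (y + q)) =ᶠ[atTop] fun y ↦ (y + p) / (y + q) := by
    filter_upwards [eventually_gt_atTop (-q)] with y hy
    field_simp [(neg_lt_iff_pos_add.1 hy).ne']
    ring
  simpa using (hlim.congr' heq).pow n

theorem tendsto_div_add_pow_nhdsGT_zero (hq : q ≠ 0) :
    Tendsto (fun y ↦ ((y + p) / (y + q)) ^ n) (𝓝[>] 0) (𝓝 ((p / q) ^ n)) := by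
  have hcont := (hasDerivAt_div_add_pow (p := p) (y := 0) n (by simpa using hq)).continuousAt
  simpa using hcont.continuousWithinAt.tendsto

theorem integrableOn_Ioi_deriv_div_add_pow (hp : 0 ≤ p) (hq : 0 < q) :
    IntegrableOn (fun y ↦ n * ((y + p) / (y + q)) ^ (n - 1) * ((q - p) / (y + q) ^ 2))
      (Ioi 0) := by
  have hderiv (y : ℝ) (hy : y ∈ Ici 0) :=
    hasDerivAt_div_add_pow (p := p) n (add_pos_of_nonneg_of_pos hy.out hq).ne'
  have hfactor (y d : ℝ) :
      n * ((y + p) / (y + q)) ^ (n - 1) * (d / (y + q) ^ 2)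
        = n * ((y + p) / (y + q)) ^ (n - 1) / (y + q) ^ 2 * d := by
    ring
  rcases le_total p q with hpq | hqp
  · refine integrableOn_Ioi_deriv_of_nonneg' hderiv (fun y hy ↦ ?_) (tendsto_div_add_pow_atTop n)
    have := hy.out
    rw [hfactor]
    exact mul_nonneg (by positivity) (sub_nonneg.2 hpq)
  · refine integrableOn_Ioi_deriv_of_nonpos' hderiv (fun y hy ↦ ?_) (tendsto_div_add_pow_atTop n)
    have := hy.out
    rw [hfactor]
    exact mul_nonpos_of_nonneg_of_nonpos (by positivity) (sub_nonpos.2 hqp)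

end RationalPow

theorem frullani_rational_pow_general (a b p q : ℝ) (n : ℕ) (ha : 0 < a) (hb : 0 < b)
    (hp : 0 < p) (hq : 0 < q) :
    ∫ x in Ioi (0:ℝ),
      (((a * x + p) / (a * x + q)) ^ n - ((b * x + p) / (b * x + q)) ^ n) / x
      = (1 - p ^ n / q ^ n) * Real.log (a / b) := by
  have hderiv (y : ℝ) (hy : y ∈ Ioi 0) :=
    hasDerivAt_div_add_pow (p := p) n (add_pos hy.out hq).ne'
  have hfrullani := Frullani.integral_Ioi_eq_of_hasDerivAt hderiv
    (by fun_prop : Measurable _).stronglyMeasurable (integrableOn_Ioi_deriv_div_add_pow n hp.le hq)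
    ha hb (tendsto_div_add_pow_nhdsGT_zero n hq.ne') (tendsto_div_add_pow_atTop n)
  simp only [smul_eq_mul, ← div_eq_inv_mul] at hfrullani
  rw [hfrullani, ← inv_div, log_inv, div_pow]
  ring

theorem frullani_rational_pow (a b p q : ℝ) (n : ℕ) (ha : 0 < a) (hb : 0 < b)
    (hp : 0 < p) (hq : 0 < q) (hn : 0 < n) :
    ∫ x in Ioi (0:ℝ),
      (((a * x + p) / (a * x + q)) ^ n - ((b * x + p) / (b * x + q)) ^ n) / x
      = (1 - p ^ n / q ^ n) * Real.log (a / b) :=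
  frullani_rational_pow_general a b p q n ha hb hp hq
end

section
/- For 0 < a < b, the improper integral ∫₀^∞ sin((b-a)x/2)·sin((b+a)x/2)/x dx equals (1/2)·ln(b/a), where the integral is interpreted as lim_{T→∞} ∫₀^T. -/
open MeasureTheory Real Set Filter

noncomputable def kkAux : ℝ → ℝ := fun u => (1 - Real.cos u) / u

lemma kkAux_bound (u : ℝ) : |kkAux u| ≤ |u| / 2 := by
  rcases eq_or_ne u 0 with rfl | h
  · simp [kkAux]
  · have h1 : |1 - Real.cos u| ≤ u ^ 2 / 2 := by
      rw [abs_of_nonneg (by linarith [Real.cos_le_one u])]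
      linarith [Real.one_sub_sq_div_two_le_cos (x := u)]
    have hu : (0:ℝ) < |u| := abs_pos.2 h
    calc |kkAux u| = |1 - Real.cos u| / |u| := abs_div _ _
      _ ≤ (u ^ 2 / 2) / |u| := by gcongr
      _ = |u| / 2 := by
          field_simp
          rw [← sq_abs]

lemma kkAux_cont : Continuous kkAux := by
  rw [continuous_iff_continuousAt]
  intro u
  rcases eq_or_ne u 0 with rfl | h
  · have h0 : kkAux 0 = 0 := by simp [kkAux]
    rw [ContinuousAt, h0]
    apply squeeze_zero_norm (a := fun t : ℝ => |t| / 2)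
      (fun t => by simpa [Real.norm_eq_abs] using kkAux_bound t)
    have : Filter.Tendsto (fun t : ℝ => |t| / 2) (nhds 0) (nhds (|(0:ℝ)| / 2)) :=
      ((continuous_abs.tendsto 0).div_const 2)
    simpa using this
  · exact ContinuousAt.div ((continuous_const.sub Real.continuous_cos).continuousAt)
      continuousAt_id h

set_option maxHeartbeats 800000 in
lemma tail_bound {s t : ℝ} (hs : 0 < s) (hst : s ≤ t) :
    |∫ u in s..t, Real.cos u / u| ≤ 2 / s := by
  have ht : 0 < t := hs.trans_le hst
  have huIcc : ∀ x ∈ uIcc s t, x ≠ 0 := fun x hx => by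
    rw [uIcc_of_le hst] at hx; exact ne_of_gt (lt_of_lt_of_le hs hx.1)
  have hderiv : ∀ x ∈ uIcc s t, HasDerivAt (fun y : ℝ => y⁻¹) (-(x ^ 2)⁻¹) x := by
    intro x hx
    exact hasDerivAt_inv (huIcc x hx)
  have hcontOn : ContinuousOn (fun x : ℝ => -(x ^ 2)⁻¹) (uIcc s t) := by
    apply ContinuousOn.neg
    apply ContinuousOn.inv₀ (by fun_prop)
    intro x hx
    exact pow_ne_zero 2 (huIcc x hx)
  have hint1 : IntervalIntegrable (fun x : ℝ => -(x ^ 2)⁻¹) volume s t :=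
    hcontOn.intervalIntegrable
  have hint2 : IntervalIntegrable Real.cos volume s t :=
    Real.continuous_cos.intervalIntegrable s t
  have ibp := intervalIntegral.integral_mul_deriv_eq_deriv_mul hderiv
    (fun x _ => Real.hasDerivAt_sin x) hint1 hint2
  -- ibp : ∫ x in s..t, x⁻¹ * cos x = t⁻¹ * sin t - s⁻¹ * sin s - ∫ x in s..t, -(x^2)⁻¹ * sin x
  have hre : (∫ u in s..t, Real.cos u / u) = ∫ x in s..t, x⁻¹ * Real.cos x :=
    intervalIntegral.integral_congr (fun x _ => div_eq_inv_mul _ _)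
  have hsq : (∫ x in s..t, -(x ^ 2)⁻¹) = t⁻¹ - s⁻¹ :=
    intervalIntegral.integral_eq_sub_of_hasDerivAt hderiv hint1
  have hintf : IntervalIntegrable (fun x : ℝ => -(x ^ 2)⁻¹ * Real.sin x) volume s t :=
    (hcontOn.mul Real.continuous_sin.continuousOn).intervalIntegrable
  have habs : |∫ x in s..t, -(x ^ 2)⁻¹ * Real.sin x| ≤ s⁻¹ - t⁻¹ := by
    have h1 : |∫ x in s..t, -(x ^ 2)⁻¹ * Real.sin x| ≤ ∫ x in s..t, |(-(x ^ 2)⁻¹ * Real.sin x)| :=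
      intervalIntegral.abs_integral_le_integral_abs hst
    have h2 : (∫ x in s..t, |(-(x ^ 2)⁻¹ * Real.sin x)|) ≤ ∫ x in s..t, (x ^ 2)⁻¹ := by
      apply intervalIntegral.integral_mono_on hst hintf.abs
      · have : ContinuousOn (fun x : ℝ => (x ^ 2)⁻¹) (uIcc s t) := by
          apply ContinuousOn.inv₀ (by fun_prop)
          intro x hx; exact pow_ne_zero 2 (huIcc x hx)
        exact this.intervalIntegrable
      · intro x hx
        have hx2 : (0:ℝ) ≤ (x ^ 2)⁻¹ := by positivity
        calc |(-(x ^ 2)⁻¹ * Real.sin x)| = (x ^ 2)⁻¹ * |Real.sin x| := by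
              rw [abs_mul, abs_neg, abs_inv, abs_pow, sq_abs]
          _ ≤ (x ^ 2)⁻¹ * 1 := by
              gcongr
              rw [abs_le]; exact ⟨Real.neg_one_le_sin x, Real.sin_le_one x⟩
          _ = (x ^ 2)⁻¹ := mul_one _
    have h3 : (∫ x in s..t, (x ^ 2)⁻¹) = s⁻¹ - t⁻¹ := by
      have := hsq
      have h4 : (∫ x in s..t, -(x ^ 2)⁻¹) = -∫ x in s..t, (x ^ 2)⁻¹ :=
        intervalIntegral.integral_neg
      rw [h4] at this
      linarith
    linarith
  have hsin_t : |t⁻¹ * Real.sin t| ≤ t⁻¹ := by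
    rw [abs_mul, abs_of_pos (inv_pos.2 ht)]
    calc t⁻¹ * |Real.sin t| ≤ t⁻¹ * 1 := by
          gcongr; rw [abs_le]; exact ⟨Real.neg_one_le_sin t, Real.sin_le_one t⟩
      _ = t⁻¹ := mul_one _
  have hsin_s : |s⁻¹ * Real.sin s| ≤ s⁻¹ := by
    rw [abs_mul, abs_of_pos (inv_pos.2 hs)]
    calc s⁻¹ * |Real.sin s| ≤ s⁻¹ * 1 := by
          gcongr; rw [abs_le]; exact ⟨Real.neg_one_le_sin s, Real.sin_le_one s⟩
      _ = s⁻¹ := mul_one _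
  rw [hre, ibp]
  have h2s : (2:ℝ) / s = s⁻¹ + s⁻¹ := by rw [div_eq_mul_inv]; ring
  calc |t⁻¹ * Real.sin t - s⁻¹ * Real.sin s - ∫ x in s..t, -(x ^ 2)⁻¹ * Real.sin x|
      ≤ |t⁻¹ * Real.sin t| + |s⁻¹ * Real.sin s| + |∫ x in s..t, -(x ^ 2)⁻¹ * Real.sin x| := by
        exact (abs_sub _ _).trans (by gcongr; exact abs_sub _ _) 
    _ ≤ t⁻¹ + s⁻¹ + (s⁻¹ - t⁻¹) := by gcongr
    _ = 2 / s := by rw [h2s]; ring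

theorem frullani_sin_sin (a b : ℝ) (ha : 0 < a) (hab : a < b) :
    Filter.Tendsto
      (fun T : ℝ => ∫ x in (0:ℝ)..T,
        Real.sin ((b - a) * x / 2) * Real.sin ((b + a) * x / 2) / x)
      atTop (nhds ((1 / 2) * Real.log (b / a))) := by
  have hb : 0 < b := ha.trans hab
  -- pointwise identity
  have hint : ∀ x : ℝ, Real.sin ((b - a) * x / 2) * Real.sin ((b + a) * x / 2) / x
      = (1 / 2) * (b * kkAux (b * x) - a * kkAux (a * x)) := by
    intro x
    rcases eq_or_ne x 0 with rfl | hx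
    · simp [kkAux]
    · have hbk : b * kkAux (b * x) = (1 - Real.cos (b * x)) / x := by
        rw [kkAux]; field_simp
      have hak : a * kkAux (a * x) = (1 - Real.cos (a * x)) / x := by
        rw [kkAux]; field_simp
      rw [hbk, hak]
      have hc : Real.cos (a * x) - Real.cos (b * x)
          = -2 * Real.sin ((a * x + b * x) / 2) * Real.sin ((a * x - b * x) / 2) :=
        Real.cos_sub_cos _ _
      have h1 : (b - a) * x / 2 = -((a * x - b * x) / 2) := by ring
      have h2 : (b + a) * x / 2 = (a * x + b * x) / 2 := by ring
      rw [h1, h2, Real.sin_neg]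
      rw [div_sub_div_same, show (1:ℝ) - Real.cos (b*x) - (1 - Real.cos (a*x))
        = Real.cos (a*x) - Real.cos (b*x) by ring, hc]
      field_simp
  -- the integral for T > 0
  have key : ∀ T : ℝ, 0 < T →
      (∫ x in (0:ℝ)..T, Real.sin ((b - a) * x / 2) * Real.sin ((b + a) * x / 2) / x)
        = (1 / 2) * (Real.log (b / a) - ∫ u in (a * T)..(b * T), Real.cos u / u) := by
    intro T hT
    have hIb : IntervalIntegrable (fun x : ℝ => b * kkAux (b * x)) volume 0 T :=
      (continuous_const.mul (kkAux_cont.comp (continuous_const.mul continuous_id))).intervalIntegrable 0 T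
    have hIa : IntervalIntegrable (fun x : ℝ => a * kkAux (a * x)) volume 0 T :=
      (continuous_const.mul (kkAux_cont.comp (continuous_const.mul continuous_id))).intervalIntegrable 0 T
    have e1 : (∫ x in (0:ℝ)..T, Real.sin ((b - a) * x / 2) * Real.sin ((b + a) * x / 2) / x)
        = ∫ x in (0:ℝ)..T, (1 / 2) * (b * kkAux (b * x) - a * kkAux (a * x)) :=
      intervalIntegral.integral_congr (fun x _ => hint x)
    rw [e1, intervalIntegral.integral_const_mul,
      intervalIntegral.integral_sub hIb hIa]
    have subB : (∫ x in (0:ℝ)..T, b * kkAux (b * x)) = ∫ u in (0:ℝ)..(b * T), kkAux u := by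
      rw [intervalIntegral.integral_const_mul]
      have := intervalIntegral.smul_integral_comp_mul_left (a := (0:ℝ)) (b := T) (f := kkAux) b
      simpa [smul_eq_mul] using this
    have subA : (∫ x in (0:ℝ)..T, a * kkAux (a * x)) = ∫ u in (0:ℝ)..(a * T), kkAux u := by
      rw [intervalIntegral.integral_const_mul]
      have := intervalIntegral.smul_integral_comp_mul_left (a := (0:ℝ)) (b := T) (f := kkAux) a
      simpa [smul_eq_mul] using this
    rw [subB, subA]
    have hsub : (∫ u in (0:ℝ)..(b * T), kkAux u) - (∫ u in (0:ℝ)..(a * T), kkAux u)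
        = ∫ u in (a * T)..(b * T), kkAux u :=
      intervalIntegral.integral_interval_sub_left
        (kkAux_cont.intervalIntegrable 0 (b * T)) (kkAux_cont.intervalIntegrable 0 (a * T))
    rw [hsub]
    have haT : 0 < a * T := mul_pos ha hT
    have hle : a * T ≤ b * T := by nlinarith
    have hne : ∀ u ∈ uIcc (a * T) (b * T), u ≠ 0 := fun u hu => by
      rw [uIcc_of_le hle] at hu
      exact ne_of_gt (lt_of_lt_of_le haT hu.1)
    have e2 : (∫ u in (a * T)..(b * T), kkAux u)
        = ∫ u in (a * T)..(b * T), (1 / u - Real.cos u / u) := by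
      apply intervalIntegral.integral_congr
      intro u hu
      exact sub_div 1 (Real.cos u) u
    have hI1 : IntervalIntegrable (fun u : ℝ => 1 / u) volume (a * T) (b * T) := by
      apply ContinuousOn.intervalIntegrable
      exact ContinuousOn.div continuousOn_const continuousOn_id hne
    have hI2 : IntervalIntegrable (fun u : ℝ => Real.cos u / u) volume (a * T) (b * T) := by
      apply ContinuousOn.intervalIntegrable
      exact ContinuousOn.div Real.continuous_cos.continuousOn continuousOn_id hne
    rw [e2, intervalIntegral.integral_sub hI1 hI2]
    have hlog : (∫ u in (a * T)..(b * T), 1 / u) = Real.log (b / a) := by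
      rw [integral_one_div (by
        intro h0
        exact hne 0 h0 rfl)]
      congr 1
      rw [mul_comm a T, mul_comm b T]
      field_simp
    rw [hlog]
  -- limit of the tail
  have hG : Filter.Tendsto (fun T : ℝ => ∫ u in (a * T)..(b * T), Real.cos u / u)
      atTop (nhds 0) := by
    apply squeeze_zero_norm' (a := fun T : ℝ => 2 / (a * T))
    · filter_upwards [eventually_gt_atTop (0:ℝ)] with T hT
      have haT : 0 < a * T := mul_pos ha hT
      have hle : a * T ≤ b * T := by nlinarith
      simpa [Real.norm_eq_abs] using tail_bound haT hle
    · apply Tendsto.div_atTop tendsto_const_nhds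
      exact Tendsto.const_mul_atTop ha tendsto_id
  have hfin : Filter.Tendsto
      (fun T : ℝ => (1 / 2) * (Real.log (b / a) - ∫ u in (a * T)..(b * T), Real.cos u / u))
      atTop (nhds ((1 / 2) * Real.log (b / a))) := by
    have := (tendsto_const_nhds (x := Real.log (b / a)) (f := atTop)).sub hG
    have h2 := this.const_mul (1 / 2 : ℝ)
    simpa using h2
  apply hfin.congr'
  filter_upwards [eventually_gt_atTop (0:ℝ)] with T hT
  exact (key T hT).symm
end
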